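/- Assume m is not constant on [0,1] and m' changes sign at most finitely many times on [0,1], i.e. there exists a partition 0 = t₀ < t₁ < ⋯ < t_N = 1 such that on each subinterval [t_{k−1}, t_k] either m'(x) ≥ 0 for all x or m'(x) ≤ 0 for all x. Then λ₁^{𝒩𝒟}(s) → ∞ as s → ∞ if and only if m is strictly increasing on [0,1]. -/

import Mathlib

/-!
If `m` fails to be strictly increasing, the finiteness of sign changes of `m'` yields an interval
`[α, β] ⊆ [0, 1]` on which `m` is nonincreasing. A cutoff `φ` equal to `1` up to some `γ ∈ (α, β)`
and vanishing from `β` on is admissible, and since the weight `e^{2sm}` is at most `e^{2sm(γ)}`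
where `φ' ≠ 0` but at least `e^{2sm(γ)}` on `[α, γ]`, its Rayleigh quotient is bounded uniformly
in `s ≥ 0`.

Conversely, writing `φ(x) = -∫ₓ¹ φ'` and applying Cauchy–Schwarz to
`e^{sm(x)} φ(x) = -∫ₓ¹ e^{s(m(x) - m(t))} · e^{sm(t)} φ'(t) dt` gives the weighted Hardy inequality
`∫ e^{2sm} φ² ≤ F(s) ∫ e^{2sm} φ'²` with `F(s) = ∫₀¹ ∫ₓ¹ e^{2s(m(x) - m(t))} dt dx`. For strictly
increasing `m` the integrand tends to `0` off the diagonal, so `F(s) → 0` by dominated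
convergence, and `λ(s) ≥ 1 / F(s) - max |c| → ∞`.
-/

open MeasureTheory Filter Set

/-- The mixed Neumann–Dirichlet principal eigenvalue of
`-φ'' - 2 s m' φ' + c φ = λ φ` on `(0,1)` with `φ'(0) = 0` and `φ(1) = 0`,
via its variational characterization. -/
noncomputable def lambdaND (m c : ℝ → ℝ) (s : ℝ) : ℝ :=
  sInf {l : ℝ | ∃ φ : ℝ → ℝ, ContDiff ℝ 1 φ ∧ φ 1 = 0 ∧
    (∫ x in (0:ℝ)..1, Real.exp (2 * s * m x) * (φ x) ^ 2) = 1 ∧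
    l = ∫ x in (0:ℝ)..1, Real.exp (2 * s * m x) * ((deriv φ x) ^ 2 + c x * (φ x) ^ 2)}

open Topology Interval

theorem sq_integral_mul_le {α : Type*} [MeasurableSpace α] {μ : Measure α} {f g : α → ℝ}
    (hf : Integrable (fun x => f x ^ 2) μ) (hg : Integrable (fun x => g x ^ 2) μ)
    (hfg : Integrable (fun x => f x * g x) μ) :
    (∫ x, f x * g x ∂μ) ^ 2 ≤ (∫ x, f x ^ 2 ∂μ) * ∫ x, g x ^ 2 ∂μ := by
  have hquad : ∀ r : ℝ, 0 ≤ (∫ x, f x ^ 2 ∂μ) * (r * r) + (2 * ∫ x, f x * g x ∂μ) * r +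
      ∫ x, g x ^ 2 ∂μ := by
    intro r
    calc (0 : ℝ) ≤ ∫ x, (r * f x + g x) ^ 2 ∂μ := integral_nonneg fun x => sq_nonneg _
      _ = ∫ x, (r * r) * f x ^ 2 + (2 * r) * (f x * g x) + g x ^ 2 ∂μ :=
        integral_congr_ae (ae_of_all _ fun x => by ring)
      _ = _ := by
        have h1 : Integrable (fun x => r * r * f x ^ 2) μ := hf.const_mul _
        have h2 : Integrable (fun x => 2 * r * (f x * g x)) μ := hfg.const_mul _
        rw [integral_add (f := fun x => r * r * f x ^ 2 + 2 * r * (f x * g x)) (h1.add h2) hg,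
          integral_add h1 h2, integral_const_mul, integral_const_mul]
        ring
  have := discrim_le_zero hquad
  rw [discrim] at this
  nlinarith

theorem sq_exp_mul (s a : ℝ) : Real.exp (s * a) ^ 2 = Real.exp (2 * s * a) := by
  rw [sq, ← Real.exp_add]
  ring_nf

theorem norm_exp_mul_le_one {s a : ℝ} (hs : 0 ≤ s) (ha : a ≤ 0) : ‖Real.exp (s * a)‖ ≤ 1 := by
  rw [Real.norm_of_nonneg (Real.exp_pos _).le, Real.exp_le_one_iff]
  exact mul_nonpos_of_nonneg_of_nonpos hs ha

theorem tendsto_intervalIntegral_exp_mul_atTop_zero {h : ℝ → ℝ} (hh : Measurable h) {a b : ℝ}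
    (hneg : ∀ t ∈ Ι a b, h t < 0) :
    Tendsto (fun s => ∫ t in a..b, Real.exp (s * h t)) atTop (𝓝 0) := by
  simpa using intervalIntegral.tendsto_integral_filter_of_dominated_convergence (fun _ => 1)
    (Eventually.of_forall fun s => (hh.const_mul s).exp.aestronglyMeasurable)
    ((eventually_ge_atTop 0).mono fun s hs =>
      ae_of_all _ fun t ht => norm_exp_mul_le_one hs (hneg t ht).le)
    intervalIntegrable_const
    (ae_of_all _ fun t ht => Real.tendsto_exp_atBot.comp
      (tendsto_id.atTop_mul_const_of_neg (hneg t ht)))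

theorem exists_contDiff_cutoff {a b : ℝ} (hab : a < b) {n : ℕ∞} :
    ∃ φ : ℝ → ℝ, ContDiff ℝ n φ ∧ (∀ x ≤ a, φ x = 1) ∧ (∀ x, b ≤ x → φ x = 0) ∧
      ∀ x ∉ Icc a b, deriv φ x = 0 := by
  set φ : ℝ → ℝ := fun x => Real.smoothTransition ((b - x) / (b - a))
  have hφ_one : ∀ x ≤ a, φ x = 1 := fun x hx =>
    Real.smoothTransition.one_of_one_le <| by rw [le_div_iff₀ (sub_pos.2 hab)]; linarith
  have hφ_zero : ∀ x, b ≤ x → φ x = 0 := fun x hx =>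
    Real.smoothTransition.zero_of_nonpos <| div_nonpos_of_nonpos_of_nonneg (by linarith)
      (by linarith)
  refine ⟨φ, Real.smoothTransition.contDiff.comp (by fun_prop), hφ_one, hφ_zero, fun x hx => ?_⟩
  rcases not_and_or.1 hx with hxa | hxb
  · have : φ =ᶠ[𝓝 x] fun _ => 1 :=
      (eventually_lt_nhds (not_le.1 hxa)).mono fun y hy => hφ_one y hy.le
    rw [this.deriv_eq, deriv_const]
  · have : φ =ᶠ[𝓝 x] fun _ => 0 :=
      (eventually_gt_nhds (not_le.1 hxb)).mono fun y hy => hφ_zero y hy.le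
    rw [this.deriv_eq, deriv_const]

theorem exists_mem_Icc_succ {t : ℕ → ℝ} {N : ℕ} (hN : 0 < N) {x : ℝ}
    (hx : x ∈ Icc (t 0) (t N)) : ∃ k < N, x ∈ Icc (t k) (t (k + 1)) := by
  induction N, hN using Nat.le_induction with
  | base => exact ⟨0, one_pos, hx⟩
  | succ n _ ih =>
    by_cases hxn : x ≤ t n
    · obtain ⟨k, hk, hxk⟩ := ih ⟨hx.1, hxn⟩
      exact ⟨k, by omega, hxk⟩
    · exact ⟨n, by omega, (not_le.1 hxn).le, hx.2⟩

theorem MonotoneOn.exists_Icc_antitoneOn {f : ℝ → ℝ} {a b : ℝ} (hf : MonotoneOn f (Icc a b))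
    (hs : ¬ StrictMonoOn f (Icc a b)) :
    ∃ α β, a ≤ α ∧ α < β ∧ β ≤ b ∧ AntitoneOn f (Icc α β) := by
  simp only [StrictMonoOn, not_forall, not_lt] at hs
  obtain ⟨x, hx, y, hy, hxy, hyx⟩ := hs
  refine ⟨x, y, hx.1, hxy, hy.2, fun u hu v hv _ => ?_⟩
  have hsub : Icc x y ⊆ Icc a b := Icc_subset_Icc hx.1 hy.2
  calc f v ≤ f y := hf (hsub hv) hy hv.2
    _ ≤ f x := hyx
    _ ≤ f u := hf hx (hsub hu) hu.1

/-- `lambdaND m c s` is, definitionally, the infimum of `weightedEnergy m c s φ` over `C¹`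
functions `φ` with `φ 1 = 0` and `weightedMass m s φ = 1`. -/
noncomputable def weightedMass (m : ℝ → ℝ) (s : ℝ) (φ : ℝ → ℝ) : ℝ :=
  ∫ x in (0:ℝ)..1, Real.exp (2 * s * m x) * φ x ^ 2

noncomputable def weightedEnergy (m c : ℝ → ℝ) (s : ℝ) (φ : ℝ → ℝ) : ℝ :=
  ∫ x in (0:ℝ)..1, Real.exp (2 * s * m x) * (deriv φ x ^ 2 + c x * φ x ^ 2)

theorem weightedMass_nonneg (m : ℝ → ℝ) (s : ℝ) (φ : ℝ → ℝ) : 0 ≤ weightedMass m s φ :=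
  intervalIntegral.integral_nonneg zero_le_one fun _ _ => by positivity

section Rayleigh

variable {m c φ : ℝ → ℝ}

theorem abs_weightedEnergy_sub_le (hm : Continuous m) (hc : Continuous c) {C : ℝ}
    (hC : ∀ x ∈ Icc (0:ℝ) 1, ‖c x‖ ≤ C) (hφ : ContDiff ℝ 1 φ) (s : ℝ) :
    |weightedEnergy m c s φ - weightedMass m s (deriv φ)| ≤ C * weightedMass m s φ := by
  have hφ' := hφ.continuous_deriv le_rfl
  have hφc := hφ.continuous
  have hsplit : weightedEnergy m c s φ - weightedMass m s (deriv φ) =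
      ∫ x in (0:ℝ)..1, c x * (Real.exp (2 * s * m x) * φ x ^ 2) := by
    rw [weightedEnergy, weightedMass, ← intervalIntegral.integral_sub
      (by apply Continuous.intervalIntegrable; fun_prop)
      (by apply Continuous.intervalIntegrable; fun_prop)]
    exact intervalIntegral.integral_congr fun x _ => by ring
  rw [hsplit, weightedMass, ← intervalIntegral.integral_const_mul, ← Real.norm_eq_abs]
  refine intervalIntegral.norm_integral_le_of_norm_le zero_le_one (ae_of_all _ fun x hx => ?_)
    (by apply Continuous.intervalIntegrable; fun_prop)
  have hw : 0 ≤ Real.exp (2 * s * m x) * φ x ^ 2 := by positivity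
  rw [norm_mul, Real.norm_of_nonneg hw]
  exact mul_le_mul_of_nonneg_right (hC x (Ioc_subset_Icc_self hx)) hw

theorem exists_weightedMass_eq_one (hφ : ContDiff ℝ 1 φ) (hφ1 : φ 1 = 0) {s : ℝ}
    (hpos : 0 < weightedMass m s φ) :
    ∃ ψ : ℝ → ℝ, ContDiff ℝ 1 ψ ∧ ψ 1 = 0 ∧ weightedMass m s ψ = 1 ∧
      weightedEnergy m c s ψ = weightedEnergy m c s φ / weightedMass m s φ := by
  set r := (Real.sqrt (weightedMass m s φ))⁻¹
  have hr : r ^ 2 = (weightedMass m s φ)⁻¹ := by rw [inv_pow, Real.sq_sqrt hpos.le]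
  have hderiv : deriv (fun y => r * φ y) = fun x => r * deriv φ x :=
    funext fun x => deriv_const_mul r (hφ.differentiable one_ne_zero x)
  refine ⟨fun x => r * φ x, contDiff_const.mul hφ, by simp [hφ1], ?_, ?_⟩
  · calc weightedMass m s (fun x => r * φ x) = r ^ 2 * weightedMass m s φ := by
          rw [weightedMass, weightedMass, ← intervalIntegral.integral_const_mul]
          exact intervalIntegral.integral_congr fun x _ => by ring
      _ = 1 := by rw [hr, inv_mul_cancel₀ hpos.ne']
  · rw [weightedEnergy, hderiv, div_eq_inv_mul, ← hr, weightedEnergy,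
      ← intervalIntegral.integral_const_mul]
    exact intervalIntegral.integral_congr fun x _ => by ring

theorem lambdaND_le_div (hm : Continuous m) (hc : Continuous c) (hφ : ContDiff ℝ 1 φ)
    (hφ1 : φ 1 = 0) {s : ℝ} (hpos : 0 < weightedMass m s φ) :
    lambdaND m c s ≤ weightedEnergy m c s φ / weightedMass m s φ := by
  obtain ⟨C, hC⟩ := isCompact_Icc.exists_bound_of_continuousOn (hc.continuousOn (s := Icc 0 1))
  obtain ⟨ψ, hψ, hψ1, hmass, henergy⟩ := exists_weightedMass_eq_one (c := c) hφ hφ1 hpos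
  refine csInf_le ⟨-C, ?_⟩ ⟨ψ, hψ, hψ1, hmass, henergy.symm⟩
  rintro _ ⟨χ, hχ, -, hmass, rfl⟩
  have := (abs_le.1 (abs_weightedEnergy_sub_le hm hc hC hχ s)).1
  change weightedMass m s χ = 1 at hmass
  rw [hmass, mul_one] at this
  change -C ≤ weightedEnergy m c s χ
  linarith [weightedMass_nonneg m s (deriv χ)]

theorem le_lambdaND (hm : Continuous m) {s L : ℝ}
    (h : ∀ φ : ℝ → ℝ, ContDiff ℝ 1 φ → φ 1 = 0 → weightedMass m s φ = 1 →
      L ≤ weightedEnergy m c s φ) :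
    L ≤ lambdaND m c s := by
  have hpos : 0 < weightedMass m s (fun x => 1 - x) :=
    intervalIntegral.intervalIntegral_pos_of_pos_on
      (by apply Continuous.intervalIntegrable; fun_prop)
      (fun x hx => mul_pos (Real.exp_pos _) (pow_pos (sub_pos.2 hx.2) 2)) one_pos
  obtain ⟨ψ, hψ, hψ1, hmass, henergy⟩ :=
    exists_weightedMass_eq_one (c := c) (contDiff_const.sub contDiff_id) (by simp) hpos
  refine le_csInf ⟨_, ψ, hψ, hψ1, hmass, rfl⟩ ?_
  rintro _ ⟨φ, hφ, hφ1, hmass, rfl⟩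
  exact h φ hφ hφ1 hmass

end Rayleigh

section Antitone

variable {m c : ℝ → ℝ} {s : ℝ}

theorem mul_exp_le_weightedMass (hm : Continuous m) {φ : ℝ → ℝ} (hφ : Continuous φ)
    {α γ : ℝ} (hα : 0 ≤ α) (hαγ : α ≤ γ) (hγ : γ ≤ 1) (hφ_one : ∀ x ∈ Icc α γ, φ x = 1)
    (hmγ : ∀ x ∈ Icc α γ, m γ ≤ m x) (hs : 0 ≤ s) :
    (γ - α) * Real.exp (2 * s * m γ) ≤ weightedMass m s φ :=
  calc (γ - α) * Real.exp (2 * s * m γ) = ∫ _ in α..γ, Real.exp (2 * s * m γ) := by simp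
    _ ≤ ∫ x in α..γ, Real.exp (2 * s * m x) * φ x ^ 2 := by
      refine intervalIntegral.integral_mono_on hαγ intervalIntegrable_const
        (by apply Continuous.intervalIntegrable; fun_prop) fun x hx => ?_
      rw [hφ_one x hx, one_pow, mul_one]
      exact Real.exp_le_exp.2 (mul_le_mul_of_nonneg_left (hmγ x hx) (by positivity))
    _ ≤ weightedMass m s φ :=
      intervalIntegral.integral_mono_interval hα hαγ hγ (ae_of_all _ fun _ => by positivity)
        (by apply Continuous.intervalIntegrable; fun_prop)

theorem weightedMass_le_exp_mul (hm : Continuous m) {ψ : ℝ → ℝ} (hψ : Continuous ψ) {γ : ℝ}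
    (hmγ : ∀ x ∈ Icc (0:ℝ) 1, m x ≤ m γ ∨ ψ x = 0) (hs : 0 ≤ s) :
    weightedMass m s ψ ≤ Real.exp (2 * s * m γ) * ∫ x in (0:ℝ)..1, ψ x ^ 2 := by
  rw [weightedMass, ← intervalIntegral.integral_const_mul]
  refine intervalIntegral.integral_mono_on zero_le_one
    (by apply Continuous.intervalIntegrable; fun_prop)
    (by apply Continuous.intervalIntegrable; fun_prop) fun x hx => ?_
  rcases hmγ x hx with hx | hx
  · exact mul_le_mul_of_nonneg_right
      (Real.exp_le_exp.2 (mul_le_mul_of_nonneg_left hx (by positivity))) (sq_nonneg _)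
  · simp [hx]

theorem exists_lambdaND_le_of_antitoneOn (hm : Continuous m) (hc : Continuous c) {α β : ℝ}
    (hα : 0 ≤ α) (hαβ : α < β) (hβ : β ≤ 1) (hanti : AntitoneOn m (Icc α β)) :
    ∃ K, ∀ s, 0 ≤ s → lambdaND m c s ≤ K := by
  obtain ⟨C, hC⟩ := isCompact_Icc.exists_bound_of_continuousOn (hc.continuousOn (s := Icc 0 1))
  obtain ⟨γ, hαγ, hγβ⟩ := exists_between hαβ
  obtain ⟨φ, hφ, hφ_one, hφ_zero, hφ'_zero⟩ := exists_contDiff_cutoff hγβ (n := 1)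
  set K₀ := ∫ x in (0:ℝ)..1, deriv φ x ^ 2
  have hK₀ : 0 ≤ K₀ := intervalIntegral.integral_nonneg zero_le_one fun _ _ => sq_nonneg _
  refine ⟨C + K₀ / (γ - α), fun s hs => ?_⟩
  set E := Real.exp (2 * s * m γ)
  have hmass : (γ - α) * E ≤ weightedMass m s φ :=
    mul_exp_le_weightedMass hm hφ.continuous hα hαγ.le (hγβ.le.trans hβ)
      (fun x hx => hφ_one x hx.2)
      (fun x hx => hanti ⟨hx.1, hx.2.trans hγβ.le⟩ ⟨hαγ.le, hγβ.le⟩ hx.2) hs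
  have hkinetic : weightedMass m s (deriv φ) ≤ E * K₀ :=
    weightedMass_le_exp_mul hm (hφ.continuous_deriv le_rfl) (fun x _ => by
      by_cases hx : x ∈ Icc γ β
      · exact .inl (hanti ⟨hαγ.le, hγβ.le⟩ ⟨hαγ.le.trans hx.1, hx.2⟩ hx.1)
      · exact .inr (hφ'_zero x hx)) hs
  have hpos : 0 < weightedMass m s φ :=
    lt_of_lt_of_le (mul_pos (sub_pos.2 hαγ) (Real.exp_pos _)) hmass
  have henergy := (abs_le.1 (abs_weightedEnergy_sub_le hm hc hC hφ s)).2
  calc lambdaND m c s ≤ weightedEnergy m c s φ / weightedMass m s φ :=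
        lambdaND_le_div hm hc hφ (hφ_zero 1 hβ) hpos
    _ ≤ C + K₀ / (γ - α) := by
      have : E * K₀ ≤ K₀ / (γ - α) * weightedMass m s φ := by
        rw [div_mul_eq_mul_div, le_div_iff₀ (sub_pos.2 hαγ)]
        nlinarith
      rw [div_le_iff₀ hpos]
      linarith

end Antitone

theorem exists_Icc_antitoneOn_of_not_strictMonoOn {m : ℝ → ℝ} (hm : Differentiable ℝ m)
    {N : ℕ} (hN : 0 < N) {t : ℕ → ℝ} (ht0 : t 0 = 0) (htN : t N = 1)
    (ht : ∀ k < N, t k < t (k + 1))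
    (hpieces : ∀ k < N, (∀ x ∈ Icc (t k) (t (k + 1)), 0 ≤ deriv m x) ∨
      (∀ x ∈ Icc (t k) (t (k + 1)), deriv m x ≤ 0))
    (hns : ¬ StrictMonoOn m (Icc 0 1)) :
    ∃ α β, 0 ≤ α ∧ α < β ∧ β ≤ 1 ∧ AntitoneOn m (Icc α β) := by
  by_cases hdec : ∃ k < N, ∀ x ∈ Icc (t k) (t (k + 1)), deriv m x ≤ 0
  · obtain ⟨k, hk, hk'⟩ := hdec
    have htmono : MonotoneOn t (Iic N) :=
      monotoneOn_of_le_add_one ordConnected_Iic fun a _ _ ha => (ht a ha).le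
    refine ⟨t k, t (k + 1), ht0 ▸ htmono (Nat.zero_le N) hk.le (Nat.zero_le k), ht k hk,
      htN ▸ htmono (show k + 1 ≤ N from hk) (le_refl N) hk, ?_⟩
    exact antitoneOn_of_deriv_nonpos (convex_Icc _ _) hm.continuous.continuousOn
      hm.differentiableOn fun x hx => hk' x (interior_subset hx)
  · push Not at hdec
    have hderiv : ∀ x ∈ Icc (0:ℝ) 1, 0 ≤ deriv m x := fun x hx => by
      obtain ⟨k, hk, hxk⟩ := exists_mem_Icc_succ hN (ht0 ▸ htN ▸ hx)
      obtain ⟨y, hy, hy'⟩ := hdec k hk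
      exact (hpieces k hk).resolve_right (fun h => (h y hy).not_gt hy') x hxk
    exact (monotoneOn_of_deriv_nonneg (convex_Icc 0 1) hm.continuous.continuousOn
      hm.differentiableOn fun x hx => hderiv x (interior_subset hx)).exists_Icc_antitoneOn hns

noncomputable def hardyKernel (m : ℝ → ℝ) (s x : ℝ) : ℝ :=
  ∫ t in x..1, Real.exp (2 * s * (m x - m t))

noncomputable def hardyConst (m : ℝ → ℝ) (s : ℝ) : ℝ :=
  ∫ x in (0:ℝ)..1, hardyKernel m s x

section Hardy

variable {m : ℝ → ℝ}

theorem continuous_hardyKernel (hm : Continuous m) (s : ℝ) : Continuous (hardyKernel m s) := by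
  have : Continuous fun x => ∫ t in (1:ℝ)..x, Real.exp (2 * s * (m x - m t)) :=
    intervalIntegral.continuous_parametric_intervalIntegral_of_continuous (by fun_prop)
      continuous_id
  exact this.neg.congr fun x => (intervalIntegral.integral_symm 1 x).symm

theorem hardyKernel_nonneg (s : ℝ) {x : ℝ} (hx : x ≤ 1) : 0 ≤ hardyKernel m s x :=
  intervalIntegral.integral_nonneg hx fun _ _ => (Real.exp_pos _).le

theorem hardyConst_pos (hm : Continuous m) (s : ℝ) : 0 < hardyConst m s :=
  intervalIntegral.intervalIntegral_pos_of_pos_on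
    ((continuous_hardyKernel hm s).intervalIntegrable 0 1)
    (fun x hx => intervalIntegral.intervalIntegral_pos_of_pos_on
      (by apply Continuous.intervalIntegrable; fun_prop) (fun _ _ => Real.exp_pos _) hx.2)
    one_pos

theorem exp_mul_sq_le_hardyKernel_mul (hm : Continuous m) {φ : ℝ → ℝ} (hφ : ContDiff ℝ 1 φ)
    (hφ1 : φ 1 = 0) (s : ℝ) {x : ℝ} (hx : x ≤ 1) :
    Real.exp (2 * s * m x) * φ x ^ 2 ≤
      hardyKernel m s x * ∫ t in x..1, Real.exp (2 * s * m t) * deriv φ t ^ 2 := by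
  have hφ' := hφ.continuous_deriv le_rfl
  have hftc : ∫ t in x..1, deriv φ t = -φ x := by
    rw [intervalIntegral.integral_deriv_eq_sub (fun y _ => hφ.differentiable one_ne_zero y)
      (hφ'.intervalIntegrable _ _), hφ1, zero_sub]
  have hcs := sq_integral_mul_le (μ := volume.restrict (Ioc x 1))
    (f := fun t => Real.exp (s * (m x - m t))) (g := fun t => Real.exp (s * m t) * deriv φ t)
    ((by fun_prop : Continuous _).intervalIntegrable x 1).1
    ((by fun_prop : Continuous _).intervalIntegrable x 1).1
    ((by fun_prop : Continuous _).intervalIntegrable x 1).1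
  simp only [← intervalIntegral.integral_of_le hx, mul_pow, sq_exp_mul] at hcs
  calc Real.exp (2 * s * m x) * φ x ^ 2
      = (∫ t in x..1, Real.exp (s * (m x - m t)) * (Real.exp (s * m t) * deriv φ t)) ^ 2 := by
        simp_rw [← mul_assoc, ← Real.exp_add, mul_sub, sub_add_cancel,
          intervalIntegral.integral_const_mul, hftc, mul_neg, neg_sq, mul_pow, sq_exp_mul]
    _ ≤ _ := hcs
    _ = _ := by simp only [hardyKernel, mul_sub, mul_assoc]
theorem weightedMass_le_hardyConst_mul (hm : Continuous m) {φ : ℝ → ℝ} (hφ : ContDiff ℝ 1 φ)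
    (hφ1 : φ 1 = 0) (s : ℝ) :
    weightedMass m s φ ≤ hardyConst m s * weightedMass m s (deriv φ) := by
  have hφc := hφ.continuous
  have hφ' := hφ.continuous_deriv le_rfl
  rw [hardyConst, ← intervalIntegral.integral_mul_const]
  refine intervalIntegral.integral_mono_on zero_le_one
    (by apply Continuous.intervalIntegrable; fun_prop)
    (((continuous_hardyKernel hm s).mul continuous_const).intervalIntegrable 0 1) fun x hx => ?_
  refine (exp_mul_sq_le_hardyKernel_mul hm hφ hφ1 s hx.2).trans
    (mul_le_mul_of_nonneg_left ?_ (hardyKernel_nonneg s hx.2))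
  exact intervalIntegral.integral_mono_interval hx.1 hx.2 le_rfl
    (ae_of_all _ fun _ => by positivity) (by apply Continuous.intervalIntegrable; fun_prop)

theorem tendsto_hardyConst_atTop_zero (hm : Continuous m) (hmono : StrictMonoOn m (Icc 0 1)) :
    Tendsto (hardyConst m) atTop (𝓝 0) := by
  have hmx : ∀ x ∈ Ι (0:ℝ) 1, ∀ t ∈ Ι x 1, 2 * (m x - m t) < 0 := fun x hx t ht => by
    rw [uIoc_of_le zero_le_one] at hx
    rw [uIoc_of_le hx.2] at ht
    have := hmono (Ioc_subset_Icc_self hx) ⟨hx.1.le.trans ht.1.le, ht.2⟩ ht.1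
    linarith
  show Tendsto (fun s => ∫ x in (0:ℝ)..1, hardyKernel m s x) atTop (𝓝 0)
  simpa using intervalIntegral.tendsto_integral_filter_of_dominated_convergence (fun _ => 1)
    (Eventually.of_forall fun s => (continuous_hardyKernel hm s).aestronglyMeasurable)
    ((eventually_ge_atTop 0).mono fun s hs => ae_of_all _ fun x hx => by
      have hx' : x ∈ Ioc 0 1 := by rwa [uIoc_of_le zero_le_one] at hx
      calc ‖hardyKernel m s x‖ ≤ 1 * |1 - x| :=
            intervalIntegral.norm_integral_le_of_norm_le_const fun t ht => by
              simpa only [← mul_assoc, mul_comm s 2] using norm_exp_mul_le_one hs (hmx x hx t ht).le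
        _ ≤ 1 := by rw [one_mul, abs_of_nonneg (sub_nonneg.2 hx'.2)]; linarith [hx'.1])
    intervalIntegrable_const
    (ae_of_all _ fun x hx => (tendsto_intervalIntegral_exp_mul_atTop_zero (by fun_prop)
      (hmx x hx)).congr fun s => intervalIntegral.integral_congr fun t _ => by ring_nf)

end Hardy

theorem tendsto_lambdaND_atTop_of_strictMonoOn {m c : ℝ → ℝ} (hm : Continuous m) (hc : Continuous c)
    (hmono : StrictMonoOn m (Icc 0 1)) : Tendsto (lambdaND m c) atTop atTop := by
  obtain ⟨C, hC⟩ := isCompact_Icc.exists_bound_of_continuousOn (hc.continuousOn (s := Icc 0 1))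
  have hlower : ∀ s, (hardyConst m s)⁻¹ - C ≤ lambdaND m c s := fun s =>
    le_lambdaND hm fun φ hφ hφ1 hmass => by
      have hhardy := weightedMass_le_hardyConst_mul hm hφ hφ1 s
      rw [hmass] at hhardy
      have := (abs_le.1 (abs_weightedEnergy_sub_le hm hc hC hφ s)).1
      rw [hmass, mul_one] at this
      have := (inv_le_iff_one_le_mul₀' (hardyConst_pos hm s)).2 hhardy
      linarith
  have hinv : Tendsto (fun s => (hardyConst m s)⁻¹) atTop atTop :=
    tendsto_inv_nhdsGT_zero.comp <| tendsto_nhdsWithin_iff.2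
      ⟨tendsto_hardyConst_atTop_zero hm hmono, Eventually.of_forall (hardyConst_pos hm)⟩
  exact tendsto_atTop_mono hlower (tendsto_atTop_add_const_right _ (-C) hinv)

theorem lambdaND_tendsto_atTop_iff
    (m c : ℝ → ℝ) (hm : ContDiff ℝ 2 m) (hc : Continuous c)
    (hsign : ∃ N : ℕ, 0 < N ∧ ∃ t : ℕ → ℝ, t 0 = 0 ∧ t N = 1 ∧
      (∀ k < N, t k < t (k + 1)) ∧
      (∀ k < N, (∀ x ∈ Set.Icc (t k) (t (k + 1)), 0 ≤ deriv m x) ∨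
                (∀ x ∈ Set.Icc (t k) (t (k + 1)), deriv m x ≤ 0))) :
    Tendsto (lambdaND m c) Filter.atTop Filter.atTop ↔
      StrictMonoOn m (Set.Icc (0:ℝ) 1) := by
  refine ⟨fun htend => by_contra fun hns => ?_,
    tendsto_lambdaND_atTop_of_strictMonoOn hm.continuous hc⟩
  obtain ⟨N, hN, t, ht0, htN, ht, hpieces⟩ := hsign
  obtain ⟨α, β, hα, hαβ, hβ, hanti⟩ := exists_Icc_antitoneOn_of_not_strictMonoOn
    (hm.differentiable two_ne_zero) hN ht0 htN ht hpieces hns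
  obtain ⟨K, hK⟩ := exists_lambdaND_le_of_antitoneOn (c := c) hm.continuous hc hα hαβ hβ hanti
  obtain ⟨s, hs, hsK⟩ := ((eventually_ge_atTop 0).and (htend.eventually_gt_atTop K)).exists
  exact (hK s hs).not_gt hsK
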